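/- arXiv:2605.26465 — 6 statements merged into one kernel-verified Lean document; each statement's English description precedes it below -/
import Mathlib

section
/- For the Optimized Unary Encoding mechanism on one-hot vectors of length k with parameters p = 1/2 and q = 1/(e^ε+1), the Bayes capacity equals (1/(2q))·((1-q)^{k-1}(2q-1) + 1). -/
/-- Bayes capacity of OUE: with `q = 1/(e^ε+1)`,
`(1/2)(1-q)^{k-1} + Σ_{i=1}^{k} C(k,i) (1/2) q^{i-1} (1-q)^{k-i}
  = (1/(2q)) ((1-q)^{k-1}(2q-1) + 1)`. -/
theorem oue_bayes_capacity (k : ℕ) (hk : 1 ≤ k) (ε : ℝ) (hε : 0 ≤ ε)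
    (q : ℝ) (hq : q = 1 / (Real.exp ε + 1)) :
    (1 / 2) * (1 - q) ^ (k - 1) +
        ∑ i ∈ Finset.Icc 1 k, (k.choose i : ℝ) * (1 / 2) * q ^ (i - 1) * (1 - q) ^ (k - i)
      = (1 / (2 * q)) * ((1 - q) ^ (k - 1) * (2 * q - 1) + 1) := by
  have hqpos : 0 < q := by
    rw [hq]
    positivity
  have hq0 : q ≠ 0 := ne_of_gt hqpos
  -- binomial theorem
  have hbin : ∑ i ∈ Finset.range (k + 1), (k.choose i : ℝ) * q ^ i * (1 - q) ^ (k - i) = 1 := by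
    have h := add_pow q (1 - q) k
    rw [show q + (1 - q) = (1:ℝ) by ring, one_pow] at h
    conv_rhs => rw [h]
    apply Finset.sum_congr rfl
    intro i _
    ring
  have hsplit : ∑ i ∈ Finset.Icc 1 k, (k.choose i : ℝ) * q ^ i * (1 - q) ^ (k - i)
      = 1 - (1 - q) ^ k := by
    have h0 : Finset.range (k + 1) = insert 0 (Finset.Icc 1 k) := by
      ext i
      simp [Nat.lt_succ_iff, Nat.one_le_iff_ne_zero]
      omega
    rw [h0, Finset.sum_insert (by simp)] at hbin
    simp at hbin
    linarith [hbin]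
  have hstep : ∑ i ∈ Finset.Icc 1 k, (k.choose i : ℝ) * (1 / 2) * q ^ (i - 1) * (1 - q) ^ (k - i)
      = (1 / (2 * q)) * (1 - (1 - q) ^ k) := by
    rw [← hsplit, Finset.mul_sum]
    apply Finset.sum_congr rfl
    intro i hi
    have hi1 : 1 ≤ i := (Finset.mem_Icc.mp hi).1
    have : q ^ i = q * q ^ (i - 1) := by
      rw [← pow_succ']
      congr 1
      omega
    rw [this]
    field_simp
  rw [hstep]
  have hk' : (1 - q) ^ k = (1 - q) ^ (k - 1) * (1 - q) := by
    rw [← pow_succ]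
    congr 1
    omega
  rw [hk']
  field_simp
  ring
end

section
/- For the Thresholding with Histogram Encoding mechanism on one-hot vectors of length k with bitwise probabilities p = 1 - (1/2)e^{ε(θ-1)/2} and q = (1/2)e^{-εθ/2}, where θ ∈ (1/2, 1) and p > q, the Bayes capacity equals (1-q)^{k-1}(1 - p/q) + p/q. -/
lemma binom_aux (k : ℕ) (q : ℝ) :
    ∑ i ∈ Finset.Icc 1 k, (k.choose i : ℝ) * q ^ i * (1 - q) ^ (k - i)
      = 1 - (1 - q) ^ k := by
  have h := add_pow q (1 - q) k
  simp only [add_sub_cancel, one_pow] at h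
  have hrange : ∑ i ∈ Finset.range (k + 1), q ^ i * (1 - q) ^ (k - i) * (k.choose i : ℝ) = 1 := h.symm
  have hmem : (0 : ℕ) ∈ Finset.range (k + 1) := by simp
  have hsplit := Finset.add_sum_erase _ (fun i => q ^ i * (1 - q) ^ (k - i) * (k.choose i : ℝ)) hmem
  have herase : (Finset.range (k + 1)).erase 0 = Finset.Icc 1 k := by
    ext i
    simp [Finset.mem_erase, Finset.mem_range, Nat.lt_succ_iff, Nat.one_le_iff_ne_zero, and_comm]
  rw [herase] at hsplit
  have : ∑ i ∈ Finset.Icc 1 k, q ^ i * (1 - q) ^ (k - i) * (k.choose i : ℝ)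
      = 1 - (1 - q) ^ k := by
    have h2 := hsplit.trans hrange
    simp only [pow_zero, Nat.sub_zero, Nat.choose_zero_right, Nat.cast_one, one_mul, mul_one] at h2
    linarith
  rw [← this]
  exact Finset.sum_congr rfl (fun i _ => by ring)

/-- Bayes capacity of THE: with `p = 1 - (1/2)e^{ε(θ-1)/2}` and `q = (1/2)e^{-εθ/2}`,
`(1-p)(1-q)^{k-1} + Σ_{i=1}^{k} C(k,i) p q^{i-1} (1-q)^{k-i}
  = (1-q)^{k-1}(1 - p/q) + p/q`. -/
theorem the_bayes_capacity (k : ℕ) (hk : 1 ≤ k) (ε θ : ℝ) (hε : 0 < ε)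
    (hθ : θ ∈ Set.Ioo (1 / 2 : ℝ) 1)
    (p q : ℝ) (hp : p = 1 - (1 / 2) * Real.exp (ε * (θ - 1) / 2))
    (hq : q = (1 / 2) * Real.exp (-(ε * θ) / 2)) (hpq : q < p) :
    (1 - p) * (1 - q) ^ (k - 1) +
        ∑ i ∈ Finset.Icc 1 k, (k.choose i : ℝ) * p * q ^ (i - 1) * (1 - q) ^ (k - i)
      = (1 - q) ^ (k - 1) * (1 - p / q) + p / q := by
  have hq0 : 0 < q := by
    rw [hq]; positivity
  have hsum : ∑ i ∈ Finset.Icc 1 k, (k.choose i : ℝ) * p * q ^ (i - 1) * (1 - q) ^ (k - i)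
      = (p / q) * (1 - (1 - q) ^ k) := by
    rw [← binom_aux k q, Finset.mul_sum]
    refine Finset.sum_congr rfl (fun i hi => ?_)
    have hi1 : 1 ≤ i := (Finset.mem_Icc.mp hi).1
    have : q ^ i = q ^ (i - 1) * q := by
      rw [← pow_succ, Nat.sub_add_cancel hi1]
    rw [this]
    field_simp
  rw [hsum]
  have hk' : (1 - q) ^ k = (1 - q) ^ (k - 1) * (1 - q) := by
    rw [← pow_succ, Nat.sub_add_cancel hk]
  rw [hk']
  field_simp
  ring
end

section
/- The posterior Bayes vulnerability under a uniform prior of the Local Hashing channel with domain size k ≥ 2, hash range g ≥ 2 and parameter ε ≥ 0 equals (e^ε·g^k + (g-1)^k(1-e^ε)) / ((e^ε+g-1)·k·g^{k-1}). -/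
/-- Posterior Bayes vulnerability (uniform prior) of the Local Hashing channel. -/
theorem lh_posterior_vulnerability (k g : ℕ) (hk : 2 ≤ k) (hg : 2 ≤ g)
    (ε : ℝ) (hε : 0 ≤ ε)
    (LH : Fin k → (Fin k → Fin g) × Fin g → ℝ)
    (hLH : ∀ (x : Fin k) (h : Fin k → Fin g) (z : Fin g),
      LH x (h, z) = if h x = z
        then (1 / (g : ℝ) ^ k) * (Real.exp ε / (Real.exp ε + g - 1))
        else (1 / (g : ℝ) ^ k) * (1 / (Real.exp ε + g - 1))) :
    ∑ y : (Fin k → Fin g) × Fin g, ⨆ x : Fin k, (1 / (k : ℝ)) * LH x y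
      = (Real.exp ε * (g : ℝ) ^ k + ((g : ℝ) - 1) ^ k * (1 - Real.exp ε)) /
          ((Real.exp ε + g - 1) * k * (g : ℝ) ^ (k - 1)) := by
  haveI : NeZero k := ⟨by omega⟩
  have hkR : (0:ℝ) < k := by positivity
  have hgR : (2:ℝ) ≤ g := by exact_mod_cast hg
  have hE : (1:ℝ) ≤ Real.exp ε := Real.one_le_exp hε
  have hD : (0:ℝ) < Real.exp ε + g - 1 := by linarith
  set E := Real.exp ε with hEdef
  set D := E + (g:ℝ) - 1 with hDdef
  have hsup : ∀ y : (Fin k → Fin g) × Fin g,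
      (⨆ x : Fin k, (1 / (k : ℝ)) * LH x y)
      = (1 / (k : ℝ)) * ((1 / (g : ℝ) ^ k) *
          (if ∃ x, y.1 x = y.2 then E / D else 1 / D)) := by
    rintro ⟨h, z⟩
    by_cases hex : ∃ x, h x = z
    · rw [if_pos hex]
      obtain ⟨x0, hx0⟩ := hex
      apply le_antisymm
      · apply ciSup_le
        intro x
        rw [hLH]
        split_ifs
        · exact le_of_eq (by ring)
        · have h1 : (1:ℝ) / D ≤ E / D := by gcongr
          have hg0 : (0:ℝ) ≤ 1 / (g:ℝ) ^ k := by positivity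
          have hk0 : (0:ℝ) ≤ 1 / (k:ℝ) := by positivity
          exact mul_le_mul_of_nonneg_left (mul_le_mul_of_nonneg_left h1 hg0) hk0
      · have hle := le_ciSup (Finite.bddAbove_range
          (fun x => (1 / (k : ℝ)) * LH x (h, z))) x0
        rw [hLH, if_pos hx0] at hle
        exact le_of_eq (by ring) |>.trans hle
    · rw [if_neg hex]
      push_neg at hex
      have : (fun x : Fin k => (1 / (k : ℝ)) * LH x (h, z))
          = fun _ => (1 / (k : ℝ)) * ((1 / (g : ℝ) ^ k) * (1 / D)) := by
        funext x
        rw [hLH, if_neg (hex x)]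
      rw [this, ciSup_const]
  simp only [hsup]
  have hcount : ∀ z : Fin g,
      (Finset.univ.filter (fun h : Fin k → Fin g => ¬ ∃ x, h x = z)).card
        = (g - 1) ^ k := by
    intro z
    have heq : (Finset.univ.filter (fun h : Fin k → Fin g => ¬ ∃ x, h x = z))
        = Fintype.piFinset (fun _ : Fin k => Finset.univ.erase z) := by
      ext h
      simp [Fintype.mem_piFinset, not_exists]
    rw [heq, Fintype.card_piFinset]
    simp [Finset.card_erase_of_mem]
  have htot : Fintype.card (Fin k → Fin g) = g ^ k := by simp
  have hcount2 : ∀ z : Fin g,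
      (Finset.univ.filter (fun h : Fin k → Fin g => ∃ x, h x = z)).card
        = g ^ k - (g - 1) ^ k := by
    intro z
    have := Finset.card_filter_add_card_filter_not
      (s := (Finset.univ : Finset (Fin k → Fin g)))
      (p := fun h => ∃ x, h x = z)
    rw [hcount z] at this
    simp only [Finset.card_univ, htot] at this
    exact Nat.eq_sub_of_add_eq this
  rw [Fintype.sum_prod_type, Finset.sum_comm]
  have hz : ∀ z : Fin g,
      (∑ h : Fin k → Fin g, (1 / (k : ℝ)) * ((1 / (g : ℝ) ^ k) *
          (if ∃ x, h x = z then E / D else 1 / D)))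
      = (1 / (k : ℝ)) * ((1 / (g : ℝ) ^ k) *
          (((g:ℝ) ^ k - ((g:ℝ) - 1) ^ k) * (E / D) + ((g:ℝ) - 1) ^ k * (1 / D))) := by
    intro z
    rw [← Finset.mul_sum]
    congr 1
    rw [← Finset.mul_sum]
    congr 1
    rw [Finset.sum_ite, Finset.sum_const, Finset.sum_const, hcount z, hcount2 z,
      nsmul_eq_mul, nsmul_eq_mul]
    have hle : (g - 1) ^ k ≤ g ^ k := Nat.pow_le_pow_left (by omega) k
    have h1g : 1 ≤ g := by omega
    have h1 : ((g ^ k - (g - 1) ^ k : ℕ) : ℝ) = (g:ℝ) ^ k - ((g:ℝ) - 1) ^ k := by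
      rw [Nat.cast_sub hle, Nat.cast_pow, Nat.cast_pow, Nat.cast_sub h1g, Nat.cast_one]
    have h2 : (((g - 1) ^ k : ℕ) : ℝ) = ((g:ℝ) - 1) ^ k := by
      rw [Nat.cast_pow, Nat.cast_sub h1g, Nat.cast_one]
    rw [h1, h2]
  simp only [hz]
  rw [Finset.sum_const, Finset.card_univ, Fintype.card_fin, nsmul_eq_mul]
  have hgk : (g:ℝ) ^ k = (g:ℝ) * (g:ℝ) ^ (k - 1) := by
    conv_lhs => rw [show k = (k - 1) + 1 by omega]
    ring
  rw [hgk]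
  have hg0 : (0:ℝ) < (g:ℝ) ^ (k - 1) := by positivity
  field_simp
  ring
end

section
/- If for 2×2 channels C and D with trade-off points (α_C, β_C), (α_D, β_D) we have β_C/(1-α_C) ≤ β_D/(1-α_D) and (1-β_C)/α_C ≥ (1-β_D)/α_D, then there exists a 2×2 row-stochastic matrix W such that C·W = D (i.e., C refines to D). -/
/-!
Binary channels compose to binary channels, so we look for `W` of the form
`binaryChannel p q`. Then `C * W = D` is a linear system in `(p, q)` with determinant
`1 - α_C - β_C`, and the cross-multiplied ratio inequalities together with
`α_D + β_D ≤ 1` say exactly that its solution lies in `[0, 1]²`. If the determinant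
vanishes, `C` has equal rows; the first ratio inequality then forces `D` to have equal
rows as well, and `W = D` works.
-/

open Matrix Set

/-- The channel with trade-off point `(α, β)`. -/
def binaryChannel {R : Type*} [Ring R] (α β : R) : Matrix (Fin 2) (Fin 2) R :=
  !![1 - α, α; β, 1 - β]

/-- `C ⊑ D` in the paper. -/
def Refines {R n : Type*} [Fintype n] [DecidableEq n] [Semiring R] [PartialOrder R]
    [IsOrderedRing R] (C D : Matrix n n R) : Prop :=
  ∃ W ∈ rowStochastic R n, C * W = D

section Ring

variable {R : Type*} [CommRing R]

theorem binaryChannel_mul_binaryChannel (α β p q : R) :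
    binaryChannel α β * binaryChannel p q =
      binaryChannel ((1 - α) * p + α * (1 - q)) (β * (1 - p) + (1 - β) * q) := by
  ext i j
  fin_cases i <;> fin_cases j <;>
    simp [binaryChannel, Matrix.mul_apply, Fin.sum_univ_two] <;> ring

variable [PartialOrder R] [IsOrderedRing R]

theorem binaryChannel_mem_rowStochastic {p q : R} (hp : p ∈ Icc 0 1) (hq : q ∈ Icc 0 1) :
    binaryChannel p q ∈ rowStochastic R (Fin 2) := by
  rw [mem_rowStochastic_iff_sum]
  refine ⟨fun i j => ?_, fun i => ?_⟩
  · fin_cases i <;> fin_cases j <;> simp [binaryChannel, hp.1, hp.2, hq.1, hq.2]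
  · fin_cases i <;> simp [binaryChannel, Fin.sum_univ_two]

theorem binaryChannel_refines_of_constant_rows {αC αD : R} (hαD : αD ∈ Icc 0 1) :
    Refines (binaryChannel αC (1 - αC)) (binaryChannel αD (1 - αD)) := by
  refine ⟨binaryChannel αD (1 - αD),
    binaryChannel_mem_rowStochastic hαD ⟨sub_nonneg.2 hαD.2, sub_le_self _ hαD.1⟩, ?_⟩
  rw [binaryChannel_mul_binaryChannel]
  congr 1 <;> ring

end Ring

variable {𝕜 : Type*} [Field 𝕜] [LinearOrder 𝕜] [IsStrictOrderedRing 𝕜] {αC βC αD βD : 𝕜}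

theorem binaryChannel_refines_of_add_lt_one (hC : αC + βC < 1) (hD : αD + βD ≤ 1)
    (hβ : βC * (1 - αD) ≤ βD * (1 - αC)) (hα : αC * (1 - βD) ≤ αD * (1 - βC)) :
    Refines (binaryChannel αC βC) (binaryChannel αD βD) := by
  have hd : 0 < 1 - αC - βC := by linarith
  -- the parameters of `W` solve `C * W = D` by Cramer's rule
  refine ⟨binaryChannel (((1 - βC) * αD - αC * (1 - βD)) / (1 - αC - βC))
      (((1 - αC) * βD - βC * (1 - αD)) / (1 - αC - βC)),
    binaryChannel_mem_rowStochastic ?_ ?_, ?_⟩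
  · rw [mem_Icc, div_le_one hd]
    exact ⟨div_nonneg (by linarith) hd.le, by linarith⟩
  · rw [mem_Icc, div_le_one hd]
    exact ⟨div_nonneg (by linarith) hd.le, by linarith⟩
  · rw [binaryChannel_mul_binaryChannel]
    congr 1 <;> field_simp <;> ring

theorem binaryChannel_refines_of_cross_mul_le (hαC : αC < 1) (hαD : αD ∈ Icc 0 1)
    (hC : αC + βC ≤ 1) (hD : αD + βD ≤ 1)
    (hβ : βC * (1 - αD) ≤ βD * (1 - αC)) (hα : αC * (1 - βD) ≤ αD * (1 - βC)) :
    Refines (binaryChannel αC βC) (binaryChannel αD βD) := by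
  rcases hC.lt_or_eq with hC | hC
  · exact binaryChannel_refines_of_add_lt_one hC hD hβ hα
  · obtain rfl : βC = 1 - αC := by linarith
    have : 1 - αD ≤ βD := le_of_mul_le_mul_left (by linarith) (sub_pos.2 hαC)
    obtain rfl : βD = 1 - αD := by linarith
    exact binaryChannel_refines_of_constant_rows hαD

theorem refinement_of_ratio_ineqs_general (αC βC αD βD : ℝ)
    (hαC : αC ∈ Set.Ioo (0 : ℝ) 1)
    (hαD : αD ∈ Set.Ioo (0 : ℝ) 1)
    (hC : βC ≤ 1 - αC) (hD : βD ≤ 1 - αD)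
    (h1 : βC / (1 - αC) ≤ βD / (1 - αD))
    (h2 : (1 - βC) / αC ≥ (1 - βD) / αD) :
    ∃ W : Matrix (Fin 2) (Fin 2) ℝ,
      (∀ i j, 0 ≤ W i j) ∧ (∀ i, ∑ j, W i j = 1) ∧
        (!![1 - αC, αC; βC, 1 - βC] : Matrix (Fin 2) (Fin 2) ℝ) * W
          = !![1 - αD, αD; βD, 1 - βD] := by
  obtain ⟨hαC0, hαC1⟩ := hαC
  obtain ⟨hαD0, hαD1⟩ := hαD
  have hβ : βC * (1 - αD) ≤ βD * (1 - αC) := by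
    rwa [div_le_div_iff₀ (sub_pos.2 hαC1) (sub_pos.2 hαD1)] at h1
  have hα : αC * (1 - βD) ≤ αD * (1 - βC) := by
    rwa [ge_iff_le, div_le_div_iff₀ hαD0 hαC0, mul_comm (1 - βD), mul_comm (1 - βC)] at h2
  obtain ⟨W, hW, hCW⟩ := binaryChannel_refines_of_cross_mul_le hαC1 ⟨hαD0.le, hαD1.le⟩
    (by linarith) (by linarith) hβ hα
  exact ⟨W, (mem_rowStochastic_iff_sum.1 hW).1, (mem_rowStochastic_iff_sum.1 hW).2, hCW⟩

/-- If the posterior-ratio inequalities hold between the trade-off points of two 2×2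
channels `C` and `D`, then there exists a row-stochastic matrix `W` with `C * W = D`. -/
theorem refinement_of_ratio_ineqs (αC βC αD βD : ℝ)
    (hαC : αC ∈ Set.Ioo (0 : ℝ) 1) (hβC : βC ∈ Set.Ioo (0 : ℝ) 1)
    (hαD : αD ∈ Set.Ioo (0 : ℝ) 1) (hβD : βD ∈ Set.Ioo (0 : ℝ) 1)
    (hC : βC ≤ 1 - αC) (hD : βD ≤ 1 - αD)
    (h1 : βC / (1 - αC) ≤ βD / (1 - αD))
    (h2 : (1 - βC) / αC ≥ (1 - βD) / αD) :
    ∃ W : Matrix (Fin 2) (Fin 2) ℝ,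
      (∀ i j, 0 ≤ W i j) ∧ (∀ i, ∑ j, W i j = 1) ∧
        (!![1 - αC, αC; βC, 1 - βC] : Matrix (Fin 2) (Fin 2) ℝ) * W
          = !![1 - αD, αD; βD, 1 - βD] :=
  refinement_of_ratio_ineqs_general αC βC αD βD hαC hαD hC hD h1 h2
end

section
/- For all ε ≥ 0, (e^ε+1)/(2e^ε) − e^{-ε/2} = (e^{ε/2}−1)²/(2e^ε) ≥ 0 and e^{ε/2} − (e^ε+1)/2 = −(e^{ε/2}−1)²/2 ≤ 0; consequently for ε > 0 the bitwise SUE channel S_ε (trade-off point α=β=1/(e^{ε/2}+1)) and the bitwise OUE channel O_ε (trade-off point α=1/(e^ε+1), β=1/2) are incomparable under refinement: neither S_ε ⊑ O_ε nor O_ε ⊑ S_ε. -/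
/-- For all `ε ≥ 0` the two ratio differences between the OUE and SUE trade-off points
are perfect squares (of opposite sign); consequently, for `ε > 0` the bitwise SUE channel
`S_ε` and the bitwise OUE channel `O_ε` are incomparable under refinement. -/
theorem sue_oue_incomparable (ε : ℝ) (hε : 0 ≤ ε) :
    (Real.exp ε + 1) / (2 * Real.exp ε) - Real.exp (-(ε / 2))
        = (Real.exp (ε / 2) - 1) ^ 2 / (2 * Real.exp ε) ∧
    (Real.exp ε + 1) / (2 * Real.exp ε) - Real.exp (-(ε / 2)) ≥ 0 ∧
    Real.exp (ε / 2) - (Real.exp ε + 1) / 2 = -(Real.exp (ε / 2) - 1) ^ 2 / 2 ∧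
    Real.exp (ε / 2) - (Real.exp ε + 1) / 2 ≤ 0 ∧
    (0 < ε →
      (¬ ∃ W : Matrix (Fin 2) (Fin 2) ℝ,
        (∀ i j, 0 ≤ W i j) ∧ (∀ i, ∑ j, W i j = 1) ∧
          (!![Real.exp (ε / 2) / (Real.exp (ε / 2) + 1), 1 / (Real.exp (ε / 2) + 1);
              1 / (Real.exp (ε / 2) + 1), Real.exp (ε / 2) / (Real.exp (ε / 2) + 1)] :
              Matrix (Fin 2) (Fin 2) ℝ) * W
            = !![Real.exp ε / (Real.exp ε + 1), 1 / (Real.exp ε + 1); 1 / 2, 1 / 2]) ∧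
      (¬ ∃ W : Matrix (Fin 2) (Fin 2) ℝ,
        (∀ i j, 0 ≤ W i j) ∧ (∀ i, ∑ j, W i j = 1) ∧
          (!![Real.exp ε / (Real.exp ε + 1), 1 / (Real.exp ε + 1);
              1 / 2, 1 / 2] : Matrix (Fin 2) (Fin 2) ℝ) * W
            = !![Real.exp (ε / 2) / (Real.exp (ε / 2) + 1), 1 / (Real.exp (ε / 2) + 1);
                1 / (Real.exp (ε / 2) + 1),
                Real.exp (ε / 2) / (Real.exp (ε / 2) + 1)])) := by
  have ht1 : (1 : ℝ) ≤ Real.exp (ε / 2) := Real.one_le_exp (by linarith)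
  have ht0 : (0 : ℝ) < Real.exp (ε / 2) := Real.exp_pos _
  have hE : Real.exp ε = Real.exp (ε / 2) ^ 2 := by
    rw [sq, ← Real.exp_add]; ring_nf
  have hneg : Real.exp (-(ε / 2)) = (Real.exp (ε / 2))⁻¹ := Real.exp_neg _
  set t := Real.exp (ε / 2) with htdef
  refine ⟨?_, ?_, ?_, ?_, ?_⟩
  · rw [hE, hneg]
    field_simp
    ring
  · rw [hE, hneg]
    rw [ge_iff_le, sub_nonneg, inv_eq_one_div, div_le_div_iff₀ (by positivity) (by positivity)]
    nlinarith [sq_nonneg (t - 1)]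
  · rw [hE]; ring
  · rw [hE]; nlinarith [sq_nonneg (t - 1)]
  · intro hε'
    have ht1' : (1 : ℝ) < t := by
      rw [htdef, show (1:ℝ) = Real.exp 0 from Real.exp_zero.symm]
      exact Real.exp_lt_exp.mpr (by linarith)
    constructor
    · rintro ⟨W, hWpos, _, hWeq⟩
      have h01 := congrFun (congrFun hWeq 0) 1
      have h11 := congrFun (congrFun hWeq 1) 1
      simp [Matrix.mul_apply, Fin.sum_univ_two] at h01 h11
      rw [hE] at h01
      -- h01 : t/(t+1) * W 0 1 + 1/(t+1) * W 1 1 = 1/(t^2+1)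
      -- h11 : 1/(t+1) * W 0 1 + t/(t+1) * W 1 1 = 1/2
      have hW01 := hWpos 0 1
      have hW11 := hWpos 1 1
      have htp : (0 : ℝ) < t + 1 := by linarith
      have htq : (0 : ℝ) < t ^ 2 + 1 := by positivity
      have e1 : (t ^ 2 + 1) * (t * W 0 1 + W 1 1) = t + 1 := by
        field_simp at h01; linear_combination h01
      have e2 : 2 * (W 0 1 + t * W 1 1) = t + 1 := by
        field_simp at h11; linear_combination h11
      have hkey : 2 * (t ^ 2 + 1) * (t ^ 2 - 1) * W 0 1 = -((t + 1) * (t - 1) ^ 2) := by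
        linear_combination 2 * t * e1 - (t ^ 2 + 1) * e2
      have h1 : 0 < t ^ 2 - 1 := by nlinarith
      have hL : 0 ≤ 2 * (t ^ 2 + 1) * (t ^ 2 - 1) * W 0 1 :=
        mul_nonneg (by positivity) hW01
      have hR : -((t + 1) * (t - 1) ^ 2) < 0 := by nlinarith [sq_nonneg (t - 1)]
      linarith [hkey ▸ hL]
    · rintro ⟨W, hWpos, _, hWeq⟩
      have h00 := congrFun (congrFun hWeq 0) 0
      have h10 := congrFun (congrFun hWeq 1) 0
      simp [Matrix.mul_apply, Fin.sum_univ_two] at h00 h10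
      rw [hE] at h00
      have hW00 := hWpos 0 0
      have hW10 := hWpos 1 0
      have htp : (0 : ℝ) < t + 1 := by linarith
      have htq : (0 : ℝ) < t ^ 2 + 1 := by positivity
      have e1 : (t + 1) * (t ^ 2 * W 0 0 + W 1 0) = t * (t ^ 2 + 1) := by
        field_simp at h00; linear_combination h00
      have e2 : (t + 1) * (W 0 0 + W 1 0) = 2 := by
        field_simp at h10; linear_combination h10
      have hkey : (t + 1) * (1 - t ^ 2) * W 1 0 = t * (t - 1) ^ 2 := by
        linear_combination e1 - t ^ 2 * e2
      have h1 : t ^ 2 - 1 > 0 := by nlinarith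
      have hL : (t + 1) * (1 - t ^ 2) * W 1 0 ≤ 0 := by
        apply mul_nonpos_of_nonpos_of_nonneg _ hW10
        nlinarith
      have hR : 0 < t * (t - 1) ^ 2 :=
        mul_pos ht0 (pow_pos (by linarith) 2)
      linarith [hkey ▸ hL]
end

section
/- For ε > 0 and θ ∈ (1/2,1), the refinement inequality β_T/(1-α_T) ≥ β_O/(1-α_O) (with α_T = (1/2)e^{-εθ/2}, β_T = (1/2)e^{-ε(1-θ)/2}, α_O = 1/(e^ε+1), β_O = 1/2) holds if and only if e^{εθ/2} ≥ (e^ε + 1 + (e^{ε/2}-1)√(e^ε+1)) / (2e^{ε/2}) or e^{εθ/2} ≤ (e^ε + 1 − (e^{ε/2}-1)√(e^ε+1)) / (2e^{ε/2}). -/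
/-!
With `E = e^{ε/2}` and `x = e^{εθ/2} > 1`, clearing the (positive) denominators turns the
inequality into `0 ≤ 2E x² - 2(E² + 1)x + (E² + 1)`. Its discriminant is `4(E² + 1)(E - 1)²`,
a perfect square times `E² + 1`, so the quadratic is nonnegative exactly outside the open
interval between its two roots.
-/

open Real

theorem quadratic_nonneg_iff {K : Type*} [Field K] [LinearOrder K] [IsStrictOrderedRing K]
    {a b c s : K} (ha : 0 < a) (hs : 0 ≤ s) (h : discrim a b c = s * s) (x : K) :
    0 ≤ a * (x * x) + b * x + c ↔ x ≤ (-b - s) / (2 * a) ∨ (-b + s) / (2 * a) ≤ x := by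
  have h4a : 0 < 4 * a := by positivity
  have key : 4 * a * (a * (x * x) + b * x + c) = (2 * a * x + b) ^ 2 - s ^ 2 := by
    rw [discrim] at h
    linear_combination -h
  calc 0 ≤ a * (x * x) + b * x + c ↔ s ^ 2 ≤ (2 * a * x + b) ^ 2 := by
        rw [← mul_nonneg_iff_of_pos_left h4a, key, sub_nonneg]
    _ ↔ 2 * a * x + b ≤ -s ∨ s ≤ 2 * a * x + b := by
        rw [sq_le_sq, abs_of_nonneg hs, le_abs']
    _ ↔ x ≤ (-b - s) / (2 * a) ∨ (-b + s) / (2 * a) ≤ x := by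
        rw [le_div_iff₀ (by positivity), div_le_iff₀ (by positivity)]
        constructor <;> rintro (h | h) <;> [left; right; left; right] <;> linarith

theorem ratio_ge_iff_quadratic_nonneg {K : Type*} [Field K] [LinearOrder K] [IsStrictOrderedRing K]
    {E x : K} (hE : 0 < E) (hx : 1 / 2 < x) :
    (1 / 2 * (x / E)) / (1 - 1 / 2 * x⁻¹) ≥ (1 / 2) / (1 - 1 / (E ^ 2 + 1)) ↔
      0 ≤ 2 * E * (x * x) + -2 * (E ^ 2 + 1) * x + (E ^ 2 + 1) := by
  have hx0 : 0 < x := by linarith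
  have lhs : (1 / 2 * (x / E)) / (1 - 1 / 2 * x⁻¹) = x * x / (E * (2 * x - 1)) := by
    field_simp
  have rhs : (1 / 2 : K) / (1 - 1 / (E ^ 2 + 1)) = (E ^ 2 + 1) / (2 * E ^ 2) := by
    field_simp
    ring
  rw [lhs, rhs, ge_iff_le, div_le_div_iff₀ (by positivity) (mul_pos hE (by linarith)),
    ← sub_nonneg]
  convert mul_nonneg_iff_of_pos_left hE using 2
  ring

/-- For `ε > 0` and `θ ∈ (1/2,1)`, the first refinement inequality between THE and OUE,
`β_T/(1-α_T) ≥ β_O/(1-α_O)`, holds iff `e^{εθ/2}` lies outside the open interval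
determined by the roots of the associated quadratic. -/
theorem the_oue_first_ineq_iff (ε θ : ℝ) (hε : 0 < ε) (hθ : θ ∈ Set.Ioo (1 / 2 : ℝ) 1) :
    ((1 / 2) * Real.exp (-(ε * (1 - θ)) / 2)) / (1 - (1 / 2) * Real.exp (-(ε * θ) / 2))
        ≥ (1 / 2) / (1 - 1 / (Real.exp ε + 1)) ↔
      Real.exp (ε * θ / 2)
          ≥ (Real.exp ε + 1 + (Real.exp (ε / 2) - 1) * Real.sqrt (Real.exp ε + 1)) /
              (2 * Real.exp (ε / 2)) ∨
        Real.exp (ε * θ / 2)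
          ≤ (Real.exp ε + 1 - (Real.exp (ε / 2) - 1) * Real.sqrt (Real.exp ε + 1)) /
              (2 * Real.exp (ε / 2)) := by
  set E := exp (ε / 2)
  set x := exp (ε * θ / 2)
  have hE : 1 < E := one_lt_exp_iff.2 (by positivity)
  have hx : 1 < x := one_lt_exp_iff.2 (by nlinarith [hθ.1])
  have exp_eq : exp ε = E ^ 2 := by rw [← exp_nat_mul]; ring_nf
  have exp_neg_θ : exp (-(ε * θ) / 2) = x⁻¹ := by rw [← exp_neg]; ring_nf
  have exp_neg_one_sub_θ : exp (-(ε * (1 - θ)) / 2) = x / E := by rw [← exp_sub]; ring_nf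
  have hdisc : discrim (2 * E) (-2 * (E ^ 2 + 1)) (E ^ 2 + 1)
      = (2 * (E - 1) * √(E ^ 2 + 1)) * (2 * (E - 1) * √(E ^ 2 + 1)) := by
    rw [discrim]
    linear_combination (-4 * (E - 1) ^ 2) * sq_sqrt (by positivity : (0 : ℝ) ≤ E ^ 2 + 1)
  rw [exp_eq, exp_neg_θ, exp_neg_one_sub_θ,
    ratio_ge_iff_quadratic_nonneg (by positivity) (by linarith),
    quadratic_nonneg_iff (by positivity) (mul_nonneg (by linarith) (sqrt_nonneg _)) hdisc,
    or_comm, ge_iff_le]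
  congr! 2 <;> field_simp
end
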